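/- arXiv:2205.09496 — 5 statements merged into one kernel-verified Lean document; each statement's English description precedes it below -/
import Mathlib

section
/- Let P(x) = exp(−1/x) and let b_n denote the maximum of the absolute values of the coefficients a_j^{(n)} in the representation P^{(n)}(x) = (∑_{j=1}^{2n} a_j^{(n)} x^{−j}) e^{−1/x} (with a_{2n}^{(n)} = 1). Then b_{n+1} ≤ 8n² b_n for all n ≥ 1, and consequently b_n ≤ 8^n (n!)² for all n ≥ 1. -/
/-!
Differentiating `q(1/x) e^{-1/x}` for a polynomial `q` gives `(X² (q - q'))(1/x) e^{-1/x}`,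
so `P⁽ⁿ⁾(x) = qₙ(1/x) e^{-1/x}` with `q₀ = 1` and `qₙ₊₁ = X² (qₙ - qₙ')`. Hence `qₙ` has
degree `2n` and leading coefficient `1`, has no constant term for `n ≥ 1`, and its
coefficients obey `a_{j+2}^{(n+1)} = a_j^{(n)} - (j+1) a_{j+1}^{(n)}`. As `a_{j+1}^{(n)}`
vanishes unless `j + 1 ≤ 2n`, this gives `b_{n+1} ≤ (2n+1) b_n ≤ 8n² b_n`, and iterating
from `b_1 = 1` gives `b_n ≤ 8ⁿ (n!)²`.
-/

open scoped BigOperators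

/-- `P x = exp (-1/x)`. -/
noncomputable def Pfun : ℝ → ℝ := fun x => Real.exp (-1 / x)

open Polynomial Finset Nat

theorem hasDerivAt_aeval_inv_mul_exp_neg_inv {R : Type*} [CommRing R] [Algebra R ℝ]
    (q : R[X]) {x : ℝ} (hx : x ≠ 0) :
    HasDerivAt (fun y => aeval y⁻¹ q * Real.exp (-y⁻¹))
      (aeval x⁻¹ (X ^ 2 * (q - derivative q)) * Real.exp (-x⁻¹)) x := by
  have hinv := hasDerivAt_inv hx
  refine (((q.hasDerivAt_aeval x⁻¹).comp x hinv).mul hinv.neg.exp).congr_deriv ?_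
  simp only [map_mul, map_sub, map_pow, aeval_X, Function.comp_apply, Pi.neg_apply]
  ring

theorem coeff_X_sq_mul_sub_derivative {R : Type*} [CommRing R] (q : R[X]) (j : ℕ) :
    (X ^ 2 * (q - derivative q)).coeff (j + 2) = q.coeff j - (j + 1) * q.coeff (j + 1) := by
  rw [coeff_X_pow_mul', if_pos (by omega), Nat.add_sub_cancel, coeff_sub, coeff_derivative,
    mul_comm]

theorem natAbs_coeff_X_sq_mul_sub_derivative_le {q : ℤ[X]} {d B : ℕ} (hd : q.natDegree ≤ d)
    (hB : ∀ j, (q.coeff j).natAbs ≤ B) (j : ℕ) :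
    ((X ^ 2 * (q - derivative q)).coeff j).natAbs ≤ (d + 1) * B := by
  obtain hj | ⟨j, rfl⟩ : j < 2 ∨ ∃ i, j = i + 2 := by
    rcases lt_or_ge j 2 with h | h
    · exact .inl h
    · exact .inr ⟨j - 2, by omega⟩
  · simp [coeff_X_pow_mul', show ¬ 2 ≤ j by omega]
  rw [coeff_X_sq_mul_sub_derivative]
  by_cases hjd : j + 1 ≤ d
  · calc _ ≤ (q.coeff j).natAbs + (j + 1) * (q.coeff (j + 1)).natAbs := by
          refine (Int.natAbs_sub_le _ _).trans_eq ?_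
          rw [Int.natAbs_mul]
          norm_cast
      _ ≤ B + d * B := by gcongr <;> apply hB
      _ = (d + 1) * B := by ring
  · rw [coeff_eq_zero_of_natDegree_lt (n := j + 1) (by omega), mul_zero, sub_zero]
    exact (hB j).trans (Nat.le_mul_of_pos_left B d.succ_pos)

theorem aeval_eq_sum_Icc {R S : Type*} [CommSemiring R] [CommSemiring S] [Algebra R S]
    {p : R[X]} {d : ℕ} (h0 : p.coeff 0 = 0) (hd : p.natDegree ≤ d) (x : S) :
    aeval x p = ∑ j ∈ Icc 1 d, p.coeff j • x ^ j := by
  rw [aeval_eq_sum_range' (Nat.lt_succ_of_le hd), sum_range_succ', h0, zero_smul, add_zero,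
    range_eq_Ico, sum_Ico_add' (fun j => p.coeff j • x ^ j), zero_add, Ico_add_one_right_eq_Icc]

/-- With `p = expNegInvPoly n` and `d = 2n` this is the paper's `bₙ`. -/
def supNatAbsCoeff (p : ℤ[X]) (d : ℕ) : ℕ :=
  (Icc 1 d).sup fun j => (p.coeff j).natAbs

theorem natAbs_coeff_le_supNatAbsCoeff {p : ℤ[X]} {d : ℕ} (h0 : p.coeff 0 = 0)
    (hd : p.natDegree ≤ d) (j : ℕ) : (p.coeff j).natAbs ≤ supNatAbsCoeff p d := by
  by_cases hj : j ∈ Icc 1 d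
  · exact le_sup (f := fun i => (p.coeff i).natAbs) hj
  · obtain rfl | hdj : j = 0 ∨ d < j := by simp only [mem_Icc] at hj; omega
    · simp [h0]
    · simp [coeff_eq_zero_of_natDegree_lt (hd.trans_lt hdj)]

theorem le_pow_mul_factorial_sq {u : ℕ → ℕ} {c : ℕ} (h1 : u 1 ≤ c)
    (hsucc : ∀ n, 1 ≤ n → u (n + 1) ≤ c * n ^ 2 * u n) {n : ℕ} (hn : 1 ≤ n) :
    u n ≤ c ^ n * n ! ^ 2 := by
  induction n, hn using Nat.le_induction with
  | base => simpa using h1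
  | succ n hn ih =>
    calc u (n + 1) ≤ c * n ^ 2 * (c ^ n * n ! ^ 2) := (hsucc n hn).trans (by gcongr)
      _ ≤ c * (n + 1) ^ 2 * (c ^ n * n ! ^ 2) := by gcongr; omega
      _ = c ^ (n + 1) * (n + 1)! ^ 2 := by rw [Nat.factorial_succ]; ring

noncomputable def expNegInvPoly : ℕ → ℤ[X]
  | 0 => 1
  | n + 1 => X ^ 2 * (expNegInvPoly n - derivative (expNegInvPoly n))

theorem iteratedDeriv_Pfun (n : ℕ) {x : ℝ} (hx : x ≠ 0) :
    iteratedDeriv n Pfun x = aeval x⁻¹ (expNegInvPoly n) * Real.exp (-x⁻¹) := by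
  induction n generalizing x with
  | zero => simp [Pfun, expNegInvPoly, neg_div]
  | succ n ih =>
    have hev : iteratedDeriv n Pfun =ᶠ[nhds x]
        fun y => aeval y⁻¹ (expNegInvPoly n) * Real.exp (-y⁻¹) :=
      (eventually_ne_nhds hx).mono fun y hy => ih hy
    rw [iteratedDeriv_succ, hev.deriv_eq, (hasDerivAt_aeval_inv_mul_exp_neg_inv _ hx).deriv,
      expNegInvPoly]

theorem natDegree_expNegInvPoly_le (n : ℕ) : (expNegInvPoly n).natDegree ≤ 2 * n := by
  induction n with
  | zero => simp [expNegInvPoly]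
  | succ n ih =>
    rw [expNegInvPoly]
    calc _ ≤ (X ^ 2 : ℤ[X]).natDegree +
          (expNegInvPoly n - derivative (expNegInvPoly n)).natDegree := natDegree_mul_le
      _ ≤ 2 + 2 * n := by
          gcongr
          · exact natDegree_X_pow_le 2
          · exact (natDegree_sub_le _ _).trans
              (max_le ih ((natDegree_derivative_le _).trans (by omega)))
      _ = 2 * (n + 1) := by ring

theorem coeff_expNegInvPoly_zero {n : ℕ} (hn : n ≠ 0) : (expNegInvPoly n).coeff 0 = 0 := by
  obtain ⟨n, rfl⟩ := Nat.exists_eq_succ_of_ne_zero hn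
  simp [expNegInvPoly]

theorem coeff_expNegInvPoly_two_mul (n : ℕ) : (expNegInvPoly n).coeff (2 * n) = 1 := by
  induction n with
  | zero => simp [expNegInvPoly]
  | succ n ih =>
    rw [show 2 * (n + 1) = 2 * n + 2 by ring, expNegInvPoly, coeff_X_sq_mul_sub_derivative, ih,
      coeff_eq_zero_of_natDegree_lt ((natDegree_expNegInvPoly_le n).trans_lt (by omega))]
    ring

theorem natAbs_coeff_expNegInvPoly_succ_le {n B : ℕ}
    (hB : ∀ j, ((expNegInvPoly n).coeff j).natAbs ≤ B) (j : ℕ) :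
    ((expNegInvPoly (n + 1)).coeff j).natAbs ≤ (2 * n + 1) * B :=
  natAbs_coeff_X_sq_mul_sub_derivative_le (natDegree_expNegInvPoly_le n) hB j

theorem supNatAbsCoeff_expNegInvPoly_one : supNatAbsCoeff (expNegInvPoly 1) 2 ≤ 1 := by
  have hB (j : ℕ) : ((expNegInvPoly 0).coeff j).natAbs ≤ 1 := by
    rw [expNegInvPoly, coeff_one]
    split_ifs <;> simp
  exact Finset.sup_le fun j _ => by simpa using natAbs_coeff_expNegInvPoly_succ_le hB j

theorem supNatAbsCoeff_expNegInvPoly_succ_le {n : ℕ} (hn : n ≠ 0) :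
    supNatAbsCoeff (expNegInvPoly (n + 1)) (2 * (n + 1)) ≤
      (2 * n + 1) * supNatAbsCoeff (expNegInvPoly n) (2 * n) :=
  Finset.sup_le fun j _ => natAbs_coeff_expNegInvPoly_succ_le
    (natAbs_coeff_le_supNatAbsCoeff (coeff_expNegInvPoly_zero hn) (natDegree_expNegInvPoly_le n)) j

/-- the integer coefficients `a_j^{(n)}` in
`P^{(n)}(x) = (∑_{j=1}^{2n} a_j^{(n)} x^{-j}) e^{-1/x}` (with `a_{2n}^{(n)} = 1`) satisfy
`b_{n+1} ≤ 8 n² b_n` and `b_n ≤ 8^n (n!)²`, where `b_n = max_{1 ≤ j ≤ 2n} |a_j^{(n)}|`. -/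
theorem stmt3 :
    ∃ a : ℕ → ℕ → ℤ,
      (∀ n, 1 ≤ n → a n (2 * n) = 1 ∧
        ∀ x : ℝ, 0 < x →
          iteratedDeriv n Pfun x =
            (∑ j ∈ Finset.Icc 1 (2 * n), (a n j : ℝ) / x ^ j) * Real.exp (-1 / x)) ∧
      (∀ n, 1 ≤ n →
        ((Finset.Icc 1 (2 * (n + 1))).sup fun j => (a (n + 1) j).natAbs) ≤
          8 * n ^ 2 * ((Finset.Icc 1 (2 * n)).sup fun j => (a n j).natAbs)) ∧
      (∀ n, 1 ≤ n →
        ((Finset.Icc 1 (2 * n)).sup fun j => (a n j).natAbs) ≤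
          8 ^ n * (Nat.factorial n) ^ 2) := by
  set b : ℕ → ℕ := fun n => supNatAbsCoeff (expNegInvPoly n) (2 * n)
  have hrec (n : ℕ) (hn : 1 ≤ n) : b (n + 1) ≤ 8 * n ^ 2 * b n :=
    (supNatAbsCoeff_expNegInvPoly_succ_le (by omega)).trans (by gcongr; nlinarith)
  have hb1 : b 1 ≤ 8 := supNatAbsCoeff_expNegInvPoly_one.trans (by norm_num)
  refine ⟨fun n j => (expNegInvPoly n).coeff j, fun n hn => ⟨coeff_expNegInvPoly_two_mul n,
    fun x hx => ?_⟩, hrec, fun n hn => le_pow_mul_factorial_sq hb1 hrec hn⟩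
  rw [iteratedDeriv_Pfun n hx.ne', aeval_eq_sum_Icc (coeff_expNegInvPoly_zero (by omega))
    (natDegree_expNegInvPoly_le n)]
  simp only [zsmul_eq_mul, inv_pow, div_eq_mul_inv, neg_mul, one_mul]
end

section
/- Define the bump weight w̄(x) = c · exp(−1/(x(1−x))) for x ∈ (0,1), with w̄(0) = w̄(1) = 0, where c = (∫₀¹ exp(−1/(s(1−s))) ds)^{−1}. Then there exists an absolute constant β > 1 such that ∫₀¹ |w̄^{(n)}(x)| dx ≤ c · n^{βn} for all n ≥ 2. -/
/-!
Write `w̄(x) = c · g(x) g(1 - x)` with `g = expNegInvGlue`. For `x > 0` the derivatives of `g` are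
`g⁽ⁿ⁾(x) = Pₙ(1/x) e^{-1/x}` with `Pₙ₊₁ = X² (Pₙ - Pₙ')`, so `Pₙ` has degree at most `2n` and
coefficients at most `(2n)!`. Since `tⁱ e^{-t} ≤ i!`, this gives `|g⁽ⁿ⁾| ≤ (2n)! (2n+1)!` on all
of `ℝ`, and the Leibniz rule bounds `|w̄⁽ⁿ⁾|` pointwise by `c · 2ⁿ ((2n)! (2n+1)!)² ≤ c · n^{21n}`
for `n ≥ 2`. The integral over `[0, 1]` is at most this supremum.
-/

open Polynomial Real Finset Nat

/-- Normalizing constant `c = (∫₀¹ exp(-1/(s(1-s))) ds)⁻¹`. -/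
noncomputable def cbar : ℝ := (∫ s in (0:ℝ)..1, Real.exp (-(s * (1 - s))⁻¹))⁻¹

/-- The bump weight `w̄(x) = c · exp(-1/(x(1-x)))` on `(0,1)`, `0` elsewhere. -/
noncomputable def wbar : ℝ → ℝ := fun x =>
  if 0 < x ∧ x < 1 then cbar * Real.exp (-(x * (1 - x))⁻¹) else 0

namespace Polynomial

variable {p : ℝ[X]} {M : ℝ}

lemma abs_coeff_derivative_le (hM : ∀ i, |p.coeff i| ≤ M) (i : ℕ) :
    |(derivative p).coeff i| ≤ p.natDegree * M := by
  have hM0 : 0 ≤ M := (abs_nonneg _).trans (hM 0)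
  rw [coeff_derivative]
  rcases le_or_gt (i + 1) p.natDegree with hi | hi
  · rw [abs_mul, abs_of_nonneg (by positivity : (0 : ℝ) ≤ i + 1), mul_comm]
    exact mul_le_mul (by exact_mod_cast hi) (hM _) (abs_nonneg _) (by positivity)
  · rw [coeff_eq_zero_of_natDegree_lt hi, zero_mul, abs_zero]
    positivity

lemma abs_eval_mul_exp_neg_le (hM : ∀ i, |p.coeff i| ≤ M) {t : ℝ} (ht : 0 ≤ t) :
    |p.eval t| * exp (-t) ≤ M * (p.natDegree + 1)! := by
  have hM0 : 0 ≤ M := (abs_nonneg _).trans (hM 0)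
  have hterm : ∀ i ∈ range (p.natDegree + 1),
      |p.coeff i * t ^ i| * exp (-t) ≤ M * p.natDegree ! := by
    intro i hi
    have hpow : t ^ i * exp (-t) ≤ i ! := by
      have := (div_le_iff₀' (by positivity)).1 (pow_div_factorial_le_exp t ht i)
      rw [exp_neg, ← div_eq_mul_inv, div_le_iff₀ (exp_pos t)]
      linarith
    have hi : i ≤ p.natDegree := Nat.lt_succ_iff.1 (mem_range.1 hi)
    rw [abs_mul, abs_of_nonneg (pow_nonneg ht i), mul_assoc]
    exact mul_le_mul (hM i) (hpow.trans (by exact_mod_cast factorial_le hi))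
      (by positivity) hM0
  calc |p.eval t| * exp (-t)
      ≤ ∑ i ∈ range (p.natDegree + 1), |p.coeff i * t ^ i| * exp (-t) := by
        rw [eval_eq_sum_range, ← sum_mul]
        gcongr
        exact abs_sum_le_sum_abs _ _
    _ ≤ ∑ _i ∈ range (p.natDegree + 1), M * p.natDegree ! := sum_le_sum hterm
    _ = M * (p.natDegree + 1)! := by
        rw [sum_const, card_range, nsmul_eq_mul, factorial_succ]; push_cast; ring

end Polynomial

namespace expNegInvGlue

-- the recurrence is that of `expNegInvGlue.hasDerivAt_polynomial_eval_inv_mul`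
noncomputable def derivPoly : ℕ → ℝ[X]
  | 0 => 1
  | n + 1 => X ^ 2 * (derivPoly n - derivative (derivPoly n))

lemma natDegree_derivPoly_le (n : ℕ) : (derivPoly n).natDegree ≤ 2 * n := by
  induction n with
  | zero => simp [derivPoly]
  | succ n ih =>
    have hsub : (derivPoly n - derivative (derivPoly n)).natDegree ≤ 2 * n :=
      (natDegree_sub_le _ _).trans (max_le ih ((natDegree_derivative_le _).trans (by omega)))
    calc (derivPoly (n + 1)).natDegree
        ≤ (X ^ 2 : ℝ[X]).natDegree + (derivPoly n - derivative (derivPoly n)).natDegree :=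
          natDegree_mul_le
      _ ≤ 2 * (n + 1) := by rw [natDegree_X_pow]; omega

lemma abs_coeff_derivPoly_le (n i : ℕ) : |(derivPoly n).coeff i| ≤ (2 * n)! := by
  induction n generalizing i with
  | zero => by_cases hi : i = 0 <;> simp [derivPoly, coeff_one, hi]
  | succ n ih =>
    rw [derivPoly, coeff_X_pow_mul']
    split_ifs
    · rw [coeff_sub]
      calc |(derivPoly n).coeff (i - 2) - (derivative (derivPoly n)).coeff (i - 2)|
          ≤ (2 * n)! + (2 * n : ℕ) * (2 * n)! := by
            refine (abs_sub _ _).trans (add_le_add (ih _) ?_)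
            refine (abs_coeff_derivative_le ih _).trans ?_
            gcongr
            exact_mod_cast natDegree_derivPoly_le n
        _ = (2 * n + 1)! := by push_cast [factorial_succ]; ring
        _ ≤ (2 * (n + 1))! := by exact_mod_cast factorial_le (by omega)
    · simp

lemma iteratedDeriv_eq (n : ℕ) (x : ℝ) :
    iteratedDeriv n expNegInvGlue x = (derivPoly n).eval x⁻¹ * expNegInvGlue x := by
  induction n generalizing x with
  | zero => simp [derivPoly]
  | succ n ih =>
    rw [iteratedDeriv_succ, funext ih]
    exact (hasDerivAt_polynomial_eval_inv_mul _ x).deriv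

lemma abs_iteratedDeriv_le (n : ℕ) (x : ℝ) :
    |iteratedDeriv n expNegInvGlue x| ≤ (2 * n)! * (2 * n + 1)! := by
  rw [iteratedDeriv_eq]
  rcases le_or_gt x 0 with hx | hx
  · rw [zero_of_nonpos hx, mul_zero, abs_zero]
    positivity
  · rw [expNegInvGlue, if_neg hx.not_ge, abs_mul, abs_of_pos (exp_pos _)]
    refine (abs_eval_mul_exp_neg_le (abs_coeff_derivPoly_le n) (inv_nonneg.2 hx.le)).trans ?_
    gcongr
    exact natDegree_derivPoly_le n

end expNegInvGlue

theorem norm_iteratedDeriv_mul_le_of_forall_le {𝕜 : Type*} [NontriviallyNormedField 𝕜]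
    {f g : 𝕜 → 𝕜} {n : ℕ} {x : 𝕜} (hf : ContDiffAt 𝕜 n f x) (hg : ContDiffAt 𝕜 n g x)
    {A B : ℝ} (hA : ∀ i ≤ n, ‖iteratedDeriv i f x‖ ≤ A)
    (hB : ∀ i ≤ n, ‖iteratedDeriv i g x‖ ≤ B) :
    ‖iteratedDeriv n (f * g) x‖ ≤ 2 ^ n * (A * B) := by
  have hA0 : 0 ≤ A := (norm_nonneg _).trans (hA 0 n.zero_le)
  have hchoose : (2 : ℝ) ^ n = ∑ i ∈ range (n + 1), (n.choose i : ℝ) := by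
    exact_mod_cast (sum_range_choose n).symm
  rw [iteratedDeriv_mul hf hg, hchoose, sum_mul]
  refine (norm_sum_le _ _).trans (sum_le_sum fun i hi => ?_)
  have hi : i ≤ n := Nat.lt_succ_iff.1 (mem_range.1 hi)
  rw [norm_mul, norm_mul, mul_assoc]
  gcongr
  · simpa using Nat.norm_cast_le (α := 𝕜) (n.choose i)
  · exact hA i hi
  · exact hB (n - i) (n.sub_le i)

lemma abs_iteratedDeriv_expNegInvGlue_mul_one_sub_le (n : ℕ) (x : ℝ) :
    |iteratedDeriv n (fun y => expNegInvGlue y * expNegInvGlue (1 - y)) x|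
      ≤ 2 ^ n * ((2 * n)! * (2 * n + 1)!) ^ 2 := by
  have hbound : ∀ i ≤ n, ∀ y, |iteratedDeriv i expNegInvGlue y| ≤ (2 * n)! * (2 * n + 1)! :=
    fun i hi y => (expNegInvGlue.abs_iteratedDeriv_le i y).trans (by gcongr)
  have hsmooth : ContDiff ℝ n expNegInvGlue := expNegInvGlue.contDiff (n := n)
  rw [sq]
  refine norm_iteratedDeriv_mul_le_of_forall_le (f := expNegInvGlue)
    (g := fun y => expNegInvGlue (1 - y)) hsmooth.contDiffAt ?_ (fun i hi => hbound i hi x)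
    (fun i hi => ?_)
  · exact (hsmooth.comp (contDiff_const.sub contDiff_id)).contDiffAt
  · rw [iteratedDeriv_comp_const_sub, norm_smul, norm_pow, norm_neg, norm_one, one_pow, one_mul]
    exact hbound i hi _

lemma cbar_nonneg : 0 ≤ cbar :=
  inv_nonneg.2 (intervalIntegral.integral_nonneg zero_le_one fun _ _ => (exp_pos _).le)

lemma wbar_eq : wbar = fun x => cbar * (expNegInvGlue x * expNegInvGlue (1 - x)) := by
  funext x
  unfold wbar
  by_cases h : 0 < x ∧ x < 1
  · rw [if_pos h]
    obtain ⟨h0, h1⟩ := h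
    have hx1 : 0 < 1 - x := by linarith
    rw [expNegInvGlue, expNegInvGlue, if_neg h0.not_ge, if_neg hx1.not_ge, ← exp_add]
    congr 2
    field_simp
    ring
  · rw [if_neg h]
    rcases not_and_or.mp h with h' | h'
    · rw [expNegInvGlue.zero_of_nonpos (not_lt.mp h')]; ring
    · rw [expNegInvGlue.zero_of_nonpos (by linarith [not_lt.mp h'] : 1 - x ≤ 0)]; ring

lemma two_pow_mul_factorial_sq_le {n : ℕ} (hn : 2 ≤ n) :
    2 ^ n * ((2 * n)! * (2 * n + 1)!) ^ 2 ≤ n ^ (21 * n) := by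
  have h2n : (2 * n)! ≤ n ^ (4 * n) :=
    calc (2 * n)! ≤ (2 * n) ^ (2 * n) := factorial_le_pow _
      _ ≤ (n ^ 2) ^ (2 * n) := by gcongr; nlinarith
      _ = n ^ (4 * n) := by rw [← pow_mul]; ring_nf
  have h2n1 : (2 * n + 1)! ≤ n ^ (6 * n) :=
    calc (2 * n + 1)! = (2 * n + 1) * (2 * n)! := factorial_succ _
      _ ≤ n ^ (2 * n) * n ^ (4 * n) :=
          Nat.mul_le_mul ((Nat.lt_two_pow_self).trans_le (Nat.pow_le_pow_left hn _)) h2n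
      _ = n ^ (6 * n) := by rw [← pow_add]; ring_nf
  calc 2 ^ n * ((2 * n)! * (2 * n + 1)!) ^ 2 ≤ n ^ n * (n ^ (4 * n) * n ^ (6 * n)) ^ 2 := by
        gcongr
    _ = n ^ (21 * n) := by rw [← pow_add, ← pow_mul, ← pow_add]; ring_nf

/-- `∫₀¹ |w̄^{(n)}| ≤ c · n^{βn}` for all `n ≥ 2`, for some absolute `β > 1`. -/
theorem stmt6 :
    ∃ β : ℝ, 1 < β ∧
      ∀ n : ℕ, 2 ≤ n →
        (∫ x in (0:ℝ)..1, |iteratedDeriv n wbar x|) ≤ cbar * (n : ℝ) ^ (β * n) := by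
  refine ⟨21, by norm_num, fun n hn => ?_⟩
  have hpointwise : ∀ x, |iteratedDeriv n wbar x| ≤ cbar * n ^ (21 * n) := by
    intro x
    rw [wbar_eq, iteratedDeriv_const_mul_field, abs_mul, abs_of_nonneg cbar_nonneg]
    have hnat : (2 : ℝ) ^ n * (((2 * n)! : ℝ) * (2 * n + 1)!) ^ 2 ≤ (n : ℝ) ^ (21 * n) := by
      exact_mod_cast two_pow_mul_factorial_sq_le hn
    exact mul_le_mul_of_nonneg_left
      ((abs_iteratedDeriv_expNegInvGlue_mul_one_sub_le n x).trans hnat) cbar_nonneg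
  calc (∫ x in (0:ℝ)..1, |iteratedDeriv n wbar x|)
      ≤ ‖∫ x in (0:ℝ)..1, |iteratedDeriv n wbar x|‖ := le_abs_self _
    _ ≤ cbar * n ^ (21 * n) * |1 - 0| :=
        intervalIntegral.norm_integral_le_of_norm_le_const fun x _ => by
          rw [norm_abs_eq_norm]; exact hpointwise x
    _ = cbar * (n : ℝ) ^ ((21 : ℝ) * n) := by
        rw [sub_zero, abs_one, mul_one, ← rpow_natCast]; push_cast; rfl
end

section
/- Let η ≥ 2 be an integer, and for ν ∈ ℕ⁺ let N(ν) = #{k ∈ ℤ*^∞ : k ≠ 0, |k|_η = ν}, where |k|_η = ∑_{j∈ℕ} ⟨j⟩^η |k_j|. Then N(ν) is finite and N(ν) ≤ 2^{⌊ν^{1/η}⌋+1} · C(ν + ⌊ν^{1/η}⌋, ν), where C(·,·) is the binomial coefficient. -/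
/-!
If `k_j ≠ 0` then `j^η ≤ |k|_η`, so every `k` with `|k|_η = ν` is supported in `{0, …, m}`,
`m = ⌊ν^{1/η}⌋`. Such a `k` is determined by its set of negative coordinates, a subset of
`{0, …, m}`, and by `|k_1|, …, |k_m|`, since `|k_0| = ν - ∑_{j ≥ 1} j^η |k_j|`. Putting the
slack `ν - ∑_{j ≥ 1} |k_j|` at index `0` turns the latter into a composition of `ν` into `m + 1`
nonnegative parts, and there are `C(ν + m, ν)` of those.
-/

open scoped BigOperators

/-- `|k|_η = ∑_j ⟨j⟩^η |k_j|` for a finitely supported integer sequence `k`. -/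
def etaNorm (η : ℕ) (k : ℕ →₀ ℤ) : ℕ :=
  ∑ j ∈ k.support, (max 1 j) ^ η * (k j).natAbs

open Finset

lemma le_floor_rpow_one_div_of_pow_le {η j ν : ℕ} (hη : η ≠ 0) (h : j ^ η ≤ ν) :
    j ≤ ⌊(ν : ℝ) ^ ((1 : ℝ) / η)⌋₊ := by
  rw [Nat.le_floor_iff (by positivity), one_div,
    Real.le_rpow_inv_iff_of_pos (by positivity) (by positivity) (by positivity),
    Real.rpow_natCast]
  exact_mod_cast h

section etaNorm

variable {η ν : ℕ} {s : Finset ℕ} {k k' : ℕ →₀ ℤ}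

lemma etaNorm_eq_sum_of_support_subset (hk : k.support ⊆ s) :
    etaNorm η k = ∑ j ∈ s, max 1 j ^ η * (k j).natAbs :=
  sum_subset hk fun _ _ hj => by simp [Finsupp.notMem_support_iff.mp hj]

lemma etaNorm_eq_natAbs_add_sum_erase (hk : k.support ⊆ s) (h0 : 0 ∈ s) :
    etaNorm η k = (k 0).natAbs + ∑ j ∈ s.erase 0, max 1 j ^ η * (k j).natAbs := by
  rw [etaNorm_eq_sum_of_support_subset hk, ← add_sum_erase s _ h0]
  simp

lemma pow_le_etaNorm {j : ℕ} (hj : k j ≠ 0) : j ^ η ≤ etaNorm η k :=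
  calc j ^ η ≤ max 1 j ^ η := Nat.pow_le_pow_left (le_max_right 1 j) η
    _ ≤ max 1 j ^ η * (k j).natAbs := Nat.le_mul_of_pos_right _ (Int.natAbs_pos.mpr hj)
    _ ≤ etaNorm η k :=
        single_le_sum (f := fun j => max 1 j ^ η * (k j).natAbs) (fun _ _ => Nat.zero_le _)
          (Finsupp.mem_support_iff.mpr hj)

lemma support_subset_range_of_etaNorm_le (hη : η ≠ 0) (hk : etaNorm η k ≤ ν) :
    k.support ⊆ range (⌊(ν : ℝ) ^ ((1 : ℝ) / η)⌋₊ + 1) := fun _ hj =>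
  mem_range_succ_iff.mpr <| le_floor_rpow_one_div_of_pow_le hη <|
    (pow_le_etaNorm (Finsupp.mem_support_iff.mp hj)).trans hk

lemma sum_erase_natAbs_le_etaNorm (hk : k.support ⊆ s) (h0 : 0 ∈ s) :
    ∑ j ∈ s.erase 0, (k j).natAbs ≤ etaNorm η k := by
  rw [etaNorm_eq_natAbs_add_sum_erase hk h0]
  exact le_add_left (sum_le_sum fun _ _ => Nat.le_mul_of_pos_left _ (by positivity))

/-- Coordinate `0` holds the slack rather than `|k 0|`, which is recovered from
`etaNorm η k = ν`. -/
noncomputable def absCode (ν : ℕ) (s : Finset ℕ) (k : ℕ →₀ ℤ) : ℕ →₀ ℕ :=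
  (k.mapRange Int.natAbs Int.natAbs_zero).update 0 (ν - ∑ j ∈ s.erase 0, (k j).natAbs)

lemma absCode_apply_zero : absCode ν s k 0 = ν - ∑ j ∈ s.erase 0, (k j).natAbs := by
  simp [absCode]

lemma absCode_apply_of_ne_zero {j : ℕ} (hj : j ≠ 0) : absCode ν s k j = (k j).natAbs := by
  simp [absCode, hj]

lemma absCode_mem_finsuppAntidiag (hk : k.support ⊆ s) (h0 : 0 ∈ s) (hν : etaNorm η k = ν) :
    absCode ν s k ∈ s.finsuppAntidiag ν := by
  have hle := hν ▸ sum_erase_natAbs_le_etaNorm (η := η) hk h0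
  rw [mem_finsuppAntidiag]
  constructor
  · rw [← add_sum_erase s _ h0, absCode_apply_zero,
      sum_congr rfl fun j hj => absCode_apply_of_ne_zero (ne_of_mem_erase hj)]
    omega
  · exact (Finsupp.support_update_subset _ _).trans
      (insert_subset h0 (Finsupp.support_mapRange.trans hk))

lemma natAbs_eq_of_absCode_eq (hk : k.support ⊆ s) (hk' : k'.support ⊆ s) (h0 : 0 ∈ s)
    (hν : etaNorm η k = ν) (hν' : etaNorm η k' = ν) (h : absCode ν s k = absCode ν s k')
    (j : ℕ) : (k j).natAbs = (k' j).natAbs := by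
  have hpos : ∀ j ≠ 0, (k j).natAbs = (k' j).natAbs := fun j hj => by
    rw [← absCode_apply_of_ne_zero hj, ← absCode_apply_of_ne_zero hj, h]
  rcases eq_or_ne j 0 with rfl | hj
  · rw [etaNorm_eq_natAbs_add_sum_erase hk h0] at hν
    rw [etaNorm_eq_natAbs_add_sum_erase hk' h0,
      sum_congr rfl fun j hj => by rw [← hpos j (ne_of_mem_erase hj)]] at hν'
    omega
  · exact hpos j hj

noncomputable def signAbsCode (ν : ℕ) (s : Finset ℕ) (k : ℕ →₀ ℤ) : Finset ℕ × (ℕ →₀ ℕ) :=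
  ({j ∈ s | k j < 0}, absCode ν s k)

lemma mapsTo_signAbsCode (h0 : 0 ∈ s) :
    Set.MapsTo (signAbsCode ν s) {k | k.support ⊆ s ∧ etaNorm η k = ν}
      ↑(s.powerset ×ˢ s.finsuppAntidiag ν) := fun _ ⟨hk, hν⟩ =>
  mem_product.mpr ⟨mem_powerset.mpr (filter_subset _ _), absCode_mem_finsuppAntidiag hk h0 hν⟩

lemma injOn_signAbsCode (h0 : 0 ∈ s) :
    Set.InjOn (signAbsCode ν s) {k | k.support ⊆ s ∧ etaNorm η k = ν} := by
  rintro k ⟨hk, hν⟩ k' ⟨hk', hν'⟩ h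
  obtain ⟨hneg, habs⟩ := Prod.ext_iff.mp h
  ext j
  by_cases hj : j ∈ s
  · have habs_j := natAbs_eq_of_absCode_eq hk hk' h0 hν hν' habs j
    have hneg_j : k j < 0 ↔ k' j < 0 := by
      simpa [signAbsCode, hj] using congrArg (j ∈ ·) hneg
    omega
  · rw [Finsupp.notMem_support_iff.mp (mt (@hk j) hj),
      Finsupp.notMem_support_iff.mp (mt (@hk' j) hj)]

variable (η ν) in
lemma finite_setOf_support_subset_etaNorm_eq (h0 : 0 ∈ s) :
    {k | k.support ⊆ s ∧ etaNorm η k = ν}.Finite :=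
  .of_injOn (mapsTo_signAbsCode h0) (injOn_signAbsCode h0) (finite_toSet _)

variable (η ν) in
lemma ncard_setOf_support_subset_etaNorm_eq_le (h0 : 0 ∈ s) :
    {k | k.support ⊆ s ∧ etaNorm η k = ν}.ncard ≤ 2 ^ #s * (#s + ν - 1).choose ν := by
  refine (Set.ncard_le_ncard_of_injOn _ (mapsTo_signAbsCode h0)
    (injOn_signAbsCode h0)).trans_eq ?_
  rw [Set.ncard_coe_finset, card_product, card_powerset, card_finsuppAntidiag_nat_eq_choose]

end etaNorm

theorem stmt9_general (η : ℕ) (hη : 2 ≤ η) (ν : ℕ) :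
    {k : ℕ →₀ ℤ | k ≠ 0 ∧ etaNorm η k = ν}.Finite ∧
    Nat.card {k : ℕ →₀ ℤ | k ≠ 0 ∧ etaNorm η k = ν} ≤
      2 ^ (⌊(ν : ℝ) ^ ((1 : ℝ) / η)⌋₊ + 1) *
        Nat.choose (ν + ⌊(ν : ℝ) ^ ((1 : ℝ) / η)⌋₊) ν := by
  set m := ⌊(ν : ℝ) ^ ((1 : ℝ) / η)⌋₊
  have h0 : 0 ∈ range (m + 1) := mem_range.mpr m.succ_pos
  have hsub : {k : ℕ →₀ ℤ | k ≠ 0 ∧ etaNorm η k = ν} ⊆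
      {k | k.support ⊆ range (m + 1) ∧ etaNorm η k = ν} := fun k ⟨_, hν⟩ =>
    ⟨support_subset_range_of_etaNorm_le (by omega) hν.le, hν⟩
  have hfin := finite_setOf_support_subset_etaNorm_eq η ν h0
  refine ⟨hfin.subset hsub, ?_⟩
  rw [Nat.card_coe_set_eq]
  calc _ ≤ _ := Set.ncard_le_ncard hsub hfin
    _ ≤ _ := ncard_setOf_support_subset_etaNorm_eq_le η ν h0
    _ = _ := by rw [card_range, add_right_comm, Nat.add_sub_cancel, add_comm ν m]

/-- the number of nonzero finitely supported integer sequences with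
`|k|_η = ν` is finite and bounded by `2^{⌊ν^{1/η}⌋+1} · C(ν + ⌊ν^{1/η}⌋, ν)`. -/
theorem stmt9 (η : ℕ) (hη : 2 ≤ η) (ν : ℕ) (hν : 1 ≤ ν) :
    {k : ℕ →₀ ℤ | k ≠ 0 ∧ etaNorm η k = ν}.Finite ∧
    Nat.card {k : ℕ →₀ ℤ | k ≠ 0 ∧ etaNorm η k = ν} ≤
      2 ^ (⌊(ν : ℝ) ^ ((1 : ℝ) / η)⌋₊ + 1) *
        Nat.choose (ν + ⌊(ν : ℝ) ^ ((1 : ℝ) / η)⌋₊) ν :=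
  stmt9_general η hη ν
end

section
/- There exists a constant C(η) > 0 such that for every integer η ≥ 2 and every ν ∈ ℕ⁺, the number of nonzero finitely-supported integer sequences k with |k|_η = ν is at most C(η) · ν^{ν^{1/η}}. -/
/-!
If `|k|_η ≤ ν` then `k_j = 0` for `j > M = ⌊ν^{1/η}⌋` and `|k_j| ≤ ν / ⟨j⟩^η` for `j ≤ M`, so `k`
lies in a box with `∏_{j ≤ M} (2 ⌊ν / ⟨j⟩^η⌋ + 1) ≤ (3ν)^{M+1} / (M!)^η` points. As
`ν < (M + 1)^η ≤ 2^{Mη}` and `(3 · 2^η)^M ≤ e^{3 · 2^η} M!` (a single term of the exponential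
series), this is at most `3 e^{3 · 2^η} ν^M ≤ 3 e^{3 · 2^η} ν^{ν^{1/η}}`.
-/

open scoped BigOperators

open Finset Nat Real

theorem Finsupp.card_Icc_neg_self {ι : Type*} [DecidableEq ι] (g : ι →₀ ℤ) {s : Finset ι}
    (hs : g.support ⊆ s) : #(Icc (-g) g) = ∏ i ∈ s, (2 * g i + 1).toNat := by
  rw [Finsupp.card_Icc, Finsupp.support_neg, union_self]
  refine (prod_subset hs fun i _ hi => ?_).trans (Finset.prod_congr rfl fun i _ => ?_)
  · simp [Finsupp.notMem_support_iff.mp hi]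
  · rw [Finsupp.neg_apply, Int.card_Icc]
    congr 1
    ring

theorem prod_range_succ_max_one (n : ℕ) : ∏ j ∈ range (n + 1), max 1 j = n ! := by
  rw [prod_range_succ', ← prod_range_add_one_eq_factorial]
  simp

theorem le_floor_rpow_one_div_iff {η : ℕ} (hη : η ≠ 0) (ν j : ℕ) :
    j ≤ ⌊(ν : ℝ) ^ ((1 : ℝ) / η)⌋₊ ↔ j ^ η ≤ ν := by
  have hroot : ((ν : ℝ) ^ ((1 : ℝ) / η)) ^ η = ν := by
    rw [← Real.rpow_natCast, ← Real.rpow_mul (by positivity),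
      one_div_mul_cancel (by exact_mod_cast hη), Real.rpow_one]
  rw [Nat.le_floor_iff (by positivity), ← pow_le_pow_iff_left₀ (by positivity) (by positivity) hη,
    hroot]
  exact_mod_cast Iff.rfl

theorem three_pow_mul_succ_pow_le {η : ℕ} (hη : 1 ≤ η) (M : ℕ) :
    (3 : ℝ) ^ M * (M + 1) ^ η ≤ exp (3 * 2 ^ η) * M ! ^ η := by
  have hM : ((M : ℝ) + 1) ≤ 2 ^ M := by exact_mod_cast Nat.lt_two_pow_self
  have hexp : ((3 : ℝ) * 2 ^ η) ^ M ≤ exp (3 * 2 ^ η) * M ! := by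
    rw [← div_le_iff₀ (by positivity)]
    exact pow_div_factorial_le_exp _ (by positivity) M
  have hfact : (M ! : ℝ) ≤ M ! ^ η := le_self_pow₀ (by exact_mod_cast M.factorial_pos) (by omega)
  calc (3 : ℝ) ^ M * (M + 1) ^ η ≤ 3 ^ M * (2 ^ M) ^ η := by gcongr
    _ = (3 * 2 ^ η) ^ M := by rw [mul_pow, ← pow_mul, ← pow_mul, mul_comm η]
    _ ≤ exp (3 * 2 ^ η) * M ! := hexp
    _ ≤ exp (3 * 2 ^ η) * M ! ^ η := by gcongr

theorem max_one_pow_mul_natAbs_le_etaNorm (η : ℕ) (k : ℕ →₀ ℤ) (j : ℕ) :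
    max 1 j ^ η * (k j).natAbs ≤ etaNorm η k := by
  by_cases hj : j ∈ k.support
  · exact single_le_sum (f := fun j => max 1 j ^ η * (k j).natAbs) (fun _ _ => zero_le _) hj
  · simp [Finsupp.notMem_support_iff.mp hj]

noncomputable def etaBox (η ν M : ℕ) : ℕ →₀ ℤ :=
  Finsupp.indicator (range (M + 1)) fun j _ => ((ν / max 1 j ^ η : ℕ) : ℤ)

section EtaBox

variable {η ν M : ℕ}

theorem setOf_etaNorm_le_subset_Icc_etaBox (hM : ∀ j, j ^ η ≤ ν → j ≤ M) :
    {k | etaNorm η k ≤ ν} ⊆ Icc (-etaBox η ν M) (etaBox η ν M) := by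
  intro k hk
  suffices h : ∀ j, |k j| ≤ etaBox η ν M j by
    simp only [coe_Icc, Set.mem_Icc, Finsupp.le_def, Finsupp.neg_apply]
    exact ⟨fun j => neg_le_of_abs_le (h j), fun j => le_of_abs_le (h j)⟩
  intro j
  have hj := (max_one_pow_mul_natAbs_le_etaNorm η k j).trans hk
  rw [etaBox, Finsupp.indicator_apply]
  split_ifs with hjM
  · rw [Int.abs_eq_natAbs, Nat.cast_le, Nat.le_div_iff_mul_le (by positivity), mul_comm]
    exact hj
  · have hkj : (k j).natAbs = 0 := by
      by_contra h
      refine hjM (mem_range_succ_iff.2 (hM j ?_))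
      calc j ^ η ≤ max 1 j ^ η * 1 := by rw [mul_one]; gcongr; exact le_max_right 1 j
        _ ≤ max 1 j ^ η * (k j).natAbs := by gcongr; omega
        _ ≤ ν := hj
    simp [Int.natAbs_eq_zero.mp hkj]

theorem card_Icc_etaBox_mul_factorial_pow_le (hν : 1 ≤ ν) (hM : ∀ j ≤ M, j ^ η ≤ ν) :
    #(Icc (-etaBox η ν M) (etaBox η ν M)) * M ! ^ η ≤ (3 * ν) ^ (M + 1) := by
  rw [Finsupp.card_Icc_neg_self (etaBox η ν M) (Finsupp.support_indicator_subset _ _),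
    ← prod_range_succ_max_one, ← prod_pow, ← prod_mul_distrib]
  refine (prod_le_prod (fun _ _ => zero_le _) fun j hj => ?_).trans_eq
    (by rw [prod_const, card_range])
  have hjM : max 1 j ^ η ≤ ν := by
    rcases j.eq_zero_or_pos with rfl | hj0
    · simpa using hν
    · rw [max_eq_right hj0]; exact hM j (mem_range_succ_iff.1 hj)
  have hdiv := Nat.div_mul_le_self ν (max 1 j ^ η)
  rw [etaBox, Finsupp.indicator_apply, dif_pos hj,
    show (2 * ((ν / max 1 j ^ η : ℕ) : ℤ) + 1).toNat = 2 * (ν / max 1 j ^ η) + 1 by omega]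
  linarith

theorem card_setOf_etaNorm_le (hη : 1 ≤ η) (hν : 1 ≤ ν) (hM : ∀ j, j ≤ M ↔ j ^ η ≤ ν) :
    (Nat.card {k : ℕ →₀ ℤ | etaNorm η k ≤ ν} : ℝ) ≤ 3 * exp (3 * 2 ^ η) * ν ^ M := by
  have hcard : Nat.card {k | etaNorm η k ≤ ν} ≤ #(Icc (-etaBox η ν M) (etaBox η ν M)) := by
    simpa using Nat.card_mono (Icc _ _).finite_toSet
      (setOf_etaNorm_le_subset_Icc_etaBox fun j => (hM j).2)
  have hbox := card_Icc_etaBox_mul_factorial_pow_le hν fun j => (hM j).1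
  have hνM : (ν : ℝ) ≤ (M + 1) ^ η := by
    exact_mod_cast (lt_of_not_ge fun h => by have := (hM (M + 1)).2 h; omega).le
  have hfact := three_pow_mul_succ_pow_le hη M
  refine le_of_mul_le_mul_right (a := (M ! : ℝ) ^ η) ?_ (by positivity)
  calc (Nat.card {k | etaNorm η k ≤ ν} : ℝ) * M ! ^ η
      ≤ (3 * ν) ^ (M + 1) := by exact_mod_cast (Nat.mul_le_mul_right _ hcard).trans hbox
    _ = 3 * (3 ^ M * ν) * ν ^ M := by ring
    _ ≤ 3 * (3 ^ M * (M + 1) ^ η) * ν ^ M := by gcongr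
    _ ≤ 3 * (exp (3 * 2 ^ η) * M ! ^ η) * ν ^ M := by gcongr
    _ = 3 * exp (3 * 2 ^ η) * ν ^ M * M ! ^ η := by ring

end EtaBox

/-- for each integer `η ≥ 2` there is `C(η) > 0` with
`#{k ≠ 0 : |k|_η = ν} ≤ C(η) · ν^{ν^{1/η}}` for every `ν ∈ ℕ⁺`. -/
theorem stmt10 (η : ℕ) (hη : 2 ≤ η) :
    ∃ C : ℝ, 0 < C ∧
      ∀ ν : ℕ, 1 ≤ ν →
        {k : ℕ →₀ ℤ | k ≠ 0 ∧ etaNorm η k = ν}.Finite ∧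
        (Nat.card {k : ℕ →₀ ℤ | k ≠ 0 ∧ etaNorm η k = ν} : ℝ) ≤
          C * (ν : ℝ) ^ ((ν : ℝ) ^ ((1 : ℝ) / η)) := by
  refine ⟨3 * exp (3 * 2 ^ η), by positivity, fun ν hν => ?_⟩
  set M := ⌊(ν : ℝ) ^ ((1 : ℝ) / η)⌋₊
  have hM : ∀ j, j ≤ M ↔ j ^ η ≤ ν := le_floor_rpow_one_div_iff (by omega) ν
  have hsub : {k : ℕ →₀ ℤ | k ≠ 0 ∧ etaNorm η k = ν} ⊆ {k | etaNorm η k ≤ ν} :=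
    fun k hk => hk.2.le
  have hfin : {k : ℕ →₀ ℤ | etaNorm η k ≤ ν}.Finite :=
    (Icc _ _).finite_toSet.subset (setOf_etaNorm_le_subset_Icc_etaBox fun j => (hM j).2)
  refine ⟨hfin.subset hsub, ?_⟩
  have hpow : (ν : ℝ) ^ M ≤ (ν : ℝ) ^ ((ν : ℝ) ^ ((1 : ℝ) / η)) := by
    rw [← Real.rpow_natCast]
    exact Real.rpow_le_rpow_of_exponent_le (by exact_mod_cast hν) (Nat.floor_le (by positivity))
  calc (Nat.card {k : ℕ →₀ ℤ | k ≠ 0 ∧ etaNorm η k = ν} : ℝ)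
      ≤ Nat.card {k : ℕ →₀ ℤ | etaNorm η k ≤ ν} := by exact_mod_cast Nat.card_mono hfin hsub
    _ ≤ 3 * exp (3 * 2 ^ η) * ν ^ M := card_setOf_etaNorm_le (by omega) hν hM
    _ ≤ 3 * exp (3 * 2 ^ η) * ν ^ ((ν : ℝ) ^ ((1 : ℝ) / η)) := by gcongr
end

section
/- Let Δ̃_∞(x) = e^x and let d(|k|_η) satisfy d(|k|_η) ≤ K · e^{|k|_η/(2m)} for all nonzero finitely supported integer sequences k (with some constant K depending on η, μ, m), where η ≥ 2 is an integer and m ≥ 2. Then ∑_{0≠k∈ℤ*^∞} d(|k|_η)^m / Δ̃_∞(|k|_η) < ∞. -/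
/-!
A sequence `k` with `|k|_η = ν` vanishes beyond `√ν` (as `η ≥ 2`) and has entries in `[-ν, ν]`,
so there are at most `(2ν + 1) ^ (√ν + 1) ≤ e^{ν/4}` of them for large `ν`. The bound on `d`
makes each summand at most `K^m e^{-ν/2}`, and `∑_ν e^{ν/4} e^{-ν/2}` converges.
-/

open scoped BigOperators

open Finset Real

lemma two_mul_add_one_le_exp_sqrt_sqrt (ν : ℕ) :
    (2 * ν + 1 : ℝ) ≤ exp (4 * ν.sqrt.sqrt + 1) := by
  set t := ν.sqrt.sqrt
  have hν : ν + 1 ≤ (t + 1) ^ 4 :=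
    calc ν + 1 ≤ (ν.sqrt + 1) ^ 2 := Nat.lt_succ_sqrt' ν
      _ ≤ ((t + 1) ^ 2) ^ 2 := Nat.pow_le_pow_left (Nat.lt_succ_sqrt' _) 2
      _ = (t + 1) ^ 4 := by ring
  calc (2 * ν + 1 : ℝ) ≤ 2 * ((t : ℝ) + 1) ^ 4 := by
        exact_mod_cast (by omega : 2 * ν + 1 ≤ 2 * (t + 1) ^ 4)
    _ ≤ exp 1 * exp t ^ 4 := by
        gcongr
        · exact (by norm_num : (2:ℝ) ≤ 1 + 1).trans (add_one_le_exp 1)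
        · exact add_one_le_exp _
    _ = exp (4 * t + 1) := by rw [← exp_nat_mul, ← exp_add]; push_cast; ring_nf

lemma two_mul_add_one_pow_le_exp (ν : ℕ) (hν : 40 ^ 4 ≤ ν) :
    (2 * ν + 1 : ℝ) ^ (ν.sqrt + 1) ≤ exp (ν / 4) := by
  set s := ν.sqrt
  set t := s.sqrt
  have ht : 40 ≤ t := Nat.le_sqrt'.2 (Nat.le_sqrt'.2 (by simpa [← pow_mul] using hν))
  have hs : t ^ 2 ≤ s := Nat.sqrt_le' s
  have hνs : s ^ 2 ≤ ν := Nat.sqrt_le' ν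
  have hpoly : (4 * t + 1) * (s + 1) * 4 ≤ ν := by nlinarith
  calc (2 * ν + 1 : ℝ) ^ (s + 1) ≤ exp (4 * t + 1) ^ (s + 1) := by
        gcongr; exact two_mul_add_one_le_exp_sqrt_sqrt ν
    _ = exp (((4 * t + 1) * (s + 1) : ℕ) : ℝ) := by rw [← exp_nat_mul]; push_cast; ring_nf
    _ ≤ exp (ν / 4) := by
        gcongr
        rw [le_div_iff₀ (by norm_num)]
        exact_mod_cast hpoly

lemma summable_two_mul_add_one_pow_mul_exp :
    Summable fun ν : ℕ => (2 * ν + 1 : ℝ) ^ (ν.sqrt + 1) * exp (-(ν / 2)) := by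
  have hgeom : Summable fun ν : ℕ => exp (ν * (-1 / 4)) := summable_exp_nat_mul_iff.2 (by norm_num)
  refine hgeom.of_norm_bounded_eventually_nat ?_
  filter_upwards [Filter.eventually_ge_atTop (40 ^ 4)] with ν hν
  rw [Real.norm_of_nonneg (by positivity)]
  calc (2 * ν + 1 : ℝ) ^ (ν.sqrt + 1) * exp (-(ν / 2)) ≤ exp (ν / 4) * exp (-(ν / 2)) := by
        gcongr; exact two_mul_add_one_pow_le_exp ν hν
    _ = exp (ν * (-1 / 4)) := by rw [← exp_add]; ring_nf

section Encoding

variable {η : ℕ}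

lemma le_etaNorm_of_mem_support (k : ℕ →₀ ℤ) {j : ℕ} (hj : j ∈ k.support) :
    max 1 j ^ η * (k j).natAbs ≤ etaNorm η k :=
  single_le_sum (f := fun j => max 1 j ^ η * (k j).natAbs) (fun _ _ => Nat.zero_le _) hj

lemma natAbs_apply_le_etaNorm (k : ℕ →₀ ℤ) (j : ℕ) : (k j).natAbs ≤ etaNorm η k := by
  by_cases hj : j ∈ k.support
  · exact (Nat.le_mul_of_pos_left _ (by positivity)).trans (le_etaNorm_of_mem_support k hj)
  · simp [Finsupp.notMem_support_iff.mp hj]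

lemma le_sqrt_etaNorm_of_mem_support (hη : 2 ≤ η) (k : ℕ →₀ ℤ) {j : ℕ} (hj : j ∈ k.support) :
    j ≤ (etaNorm η k).sqrt := by
  rw [Nat.le_sqrt']
  have hk : 1 ≤ (k j).natAbs := Int.natAbs_pos.2 (Finsupp.mem_support_iff.1 hj)
  calc j ^ 2 ≤ max 1 j ^ 2 := Nat.pow_le_pow_left (le_max_right 1 j) 2
    _ ≤ max 1 j ^ η := Nat.pow_le_pow_right (by omega) hη
    _ ≤ max 1 j ^ η * (k j).natAbs := Nat.le_mul_of_pos_right _ hk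
    _ ≤ etaNorm η k := le_etaNorm_of_mem_support k hj

abbrev Window (ν : ℕ) : Type := Fin (ν.sqrt + 1) → Icc (-(ν : ℤ)) ν

lemma card_window (ν : ℕ) : Nat.card (Window ν) = (2 * ν + 1) ^ (ν.sqrt + 1) := by
  rw [Nat.card_eq_fintype_card, Fintype.card_fun, Fintype.card_coe, Int.card_Icc,
    Fintype.card_fin]
  congr 1
  omega

def etaNormEncode (η : ℕ) (k : ℕ →₀ ℤ) : Σ ν, Window ν :=
  ⟨etaNorm η k, fun j => ⟨k j, mem_Icc.2 (by have := natAbs_apply_le_etaNorm (η := η) k j; omega)⟩⟩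

def decodeWindow (p : Σ ν, Window ν) (j : ℕ) : ℤ :=
  if h : j < p.1.sqrt + 1 then p.2 ⟨j, h⟩ else 0

lemma decode_etaNormEncode (hη : 2 ≤ η) (k : ℕ →₀ ℤ) : decodeWindow (etaNormEncode η k) = k := by
  funext j
  by_cases hj : j < (etaNorm η k).sqrt + 1
  · exact dif_pos hj
  · have : j ∉ k.support := fun h => hj (Nat.lt_succ_of_le (le_sqrt_etaNorm_of_mem_support hη k h))
    simp [decodeWindow, etaNormEncode, hj, Finsupp.notMem_support_iff.1 this]

lemma etaNormEncode_injective (hη : 2 ≤ η) : Function.Injective (etaNormEncode η) := fun k l h =>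
  DFunLike.coe_injective <| by
    rw [← decode_etaNormEncode hη k, ← decode_etaNormEncode hη l, h]

end Encoding

lemma summable_exp_neg_half_etaNorm {η : ℕ} (hη : 2 ≤ η) :
    Summable fun k : ℕ →₀ ℤ => exp (-(etaNorm η k / 2)) := by
  have hsigma : Summable fun p : Σ ν, Window ν => exp (-(p.1 / 2 : ℝ)) := by
    refine (summable_sigma_of_nonneg fun _ => (exp_pos _).le).2 ⟨fun _ => .of_finite, ?_⟩
    refine summable_two_mul_add_one_pow_mul_exp.congr fun ν => ?_
    change _ = ∑' _ : Window ν, exp (-(ν / 2 : ℝ))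
    rw [tsum_const, card_window, nsmul_eq_mul]
    push_cast
    rfl
  exact hsigma.comp_injective (etaNormEncode_injective hη) |>.congr fun k => by
    simp only [Function.comp_apply, etaNormEncode]

theorem stmt12_general (η m : ℕ) (hη : 2 ≤ η) (hm : 2 ≤ m)
    (d : ℝ → ℝ) (hd0 : ∀ x, 0 ≤ d x) (K : ℝ)
    (hd : ∀ k : ℕ →₀ ℤ, k ≠ 0 →
      d (etaNorm η k) ≤ K * Real.exp ((etaNorm η k : ℝ) / (2 * m))) :
    Summable (fun k : {k : ℕ →₀ ℤ // k ≠ 0} =>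
      d (etaNorm η k.1) ^ m / Real.exp (etaNorm η k.1)) := by
  refine (((summable_exp_neg_half_etaNorm hη).subtype _).mul_left (K ^ m)).of_nonneg_of_le
    (fun k => by have := hd0 (etaNorm η k.1); positivity) fun k => ?_
  set ν : ℝ := (etaNorm η k.1 : ℝ)
  have hm0 : (m : ℝ) ≠ 0 := Nat.cast_ne_zero.2 (by omega)
  calc d ν ^ m / exp ν ≤ (K * exp (ν / (2 * m))) ^ m / exp ν := by
        gcongr; exacts [hd0 _, hd k.1 k.2]
    _ = K ^ m * exp (-(ν / 2)) := by
        rw [mul_pow, ← exp_nat_mul, mul_div_assoc, ← exp_sub]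
        congr 2
        field_simp
        ring

/-- if `d(|k|_η) ≤ K e^{|k|_η/(2m)}` and `Δ̃_∞(x) = e^x`, then
`∑_{0 ≠ k ∈ ℤ*^∞} d(|k|_η)^m / Δ̃_∞(|k|_η) < ∞`. -/
theorem stmt12 (η m : ℕ) (hη : 2 ≤ η) (hm : 2 ≤ m)
    (d : ℝ → ℝ) (hd0 : ∀ x, 0 ≤ d x) (K : ℝ) (hK : 0 < K)
    (hd : ∀ k : ℕ →₀ ℤ, k ≠ 0 →
      d (etaNorm η k) ≤ K * Real.exp ((etaNorm η k : ℝ) / (2 * m))) :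
    Summable (fun k : {k : ℕ →₀ ℤ // k ≠ 0} =>
      d (etaNorm η k.1) ^ m / Real.exp (etaNorm η k.1)) :=
  stmt12_general η m hη hm d hd0 K hd
end
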